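/- arXiv:1803.06300 — 2 statements merged into one kernel-verified Lean document; each statement's English description precedes it below -/
import Mathlib

section
/- In a deterministic labeled transition system, let a be an action enabled at a state s, and let T = ⟨a₀, …, a_k⟩ be a finite action sequence executing from s such that every action a_i occurring in T is independent of a. Then: (1) a is enabled at the result state r(T, s); (2) T executes from the state a(s); and (3) a(r(T, s)) = r(T, a(s)). -/
/-!
Independence of `x` and `a` closes every fork `x(s)`, `a(s)` into a diamond. Moving `a`
along `T` one action at a time tiles a ladder of such diamonds, whose top edge is `a` at
`r(T, s)` and whose far side is `T` run from `a(s)`.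
-/

/-- Run a finite sequence of actions from a state in a deterministic LTS
given by the partial step function `step`. -/
def run {S A : Type*} (step : A → S → Option S) : List A → S → Option S
  | [], s => some s
  | a :: T, s => (step a s).bind (run step T)

/-- Actions `a` and `b` are independent: whenever both are enabled at a state `s`,
`b` is enabled at `a(s)`, `a` is enabled at `b(s)`, and `a(b(s)) = b(a(s))`. -/
def Indep {S A : Type*} (step : A → S → Option S) (a b : A) : Prop :=
  ∀ s sa sb, step a s = some sa → step b s = some sb →
    step b sa ≠ none ∧ step b sa = step a sb

section

variable {S A : Type*} {step : A → S → Option S}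

theorem run_cons_eq_some_iff {b : A} {T : List A} {s t : S} :
    run step (b :: T) s = some t ↔ ∃ sb, step b s = some sb ∧ run step T sb = some t :=
  Option.bind_eq_some_iff

theorem Indep.exists_diamond {a b : A} {s sa sb : S} (hba : Indep step b a)
    (hb : step b s = some sb) (ha : step a s = some sa) :
    ∃ u, step a sb = some u ∧ step b sa = some u := by
  obtain ⟨hne, heq⟩ := hba s sb sa hb ha
  obtain ⟨u, hu⟩ := Option.ne_none_iff_exists'.mp hne
  exact ⟨u, hu, heq ▸ hu⟩

end

/-- If `a` is enabled at `s` (with `a(s) = sa`), `T` executes from `s` with result `t`,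
and every action of `T` is independent of `a`, then `a` is enabled at `t`, `T` executes
from `sa`, and `a(r(T,s)) = r(T, a(s))`. -/
theorem indep_commute_run {S A : Type*} (step : A → S → Option S) (a : A)
    (T : List A) (s sa t : S)
    (ha : step a s = some sa)
    (hT : run step T s = some t)
    (hindep : ∀ x ∈ T, Indep step x a) :
    ∃ t', step a t = some t' ∧ run step T sa = some t' := by
  induction T generalizing s sa with
  | nil =>
    obtain rfl : s = t := Option.some_injective _ hT
    exact ⟨sa, ha, rfl⟩
  | cons b T ih =>
    obtain ⟨sb, hb, hrun⟩ := run_cons_eq_some_iff.mp hT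
    obtain ⟨u, hau, hbu⟩ := (hindep b List.mem_cons_self).exists_diamond hb ha
    obtain ⟨t', hat', hrun'⟩ :=
      ih sb u hau hrun fun x hx => hindep x (List.mem_cons_of_mem b hx)
    exact ⟨t', hat', run_cons_eq_some_iff.mpr ⟨u, hbu, hrun'⟩⟩
end

section
/- In a deterministic labeled transition system, let a be an action enabled at a state s, and suppose that every action b distinct from a that is co-enabled with a at some state (i.e., there exists a state s' at which both a and b are enabled) is independent of a. Then for every execution from s consisting of actions a₀, …, a_k followed by one further action b such that b ≠ a and b is not independent of a, there exists an index i ≤ k with a_i = a. (This is condition C1 of partial-order reduction for a singleton ample set {a}.) -/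
/-
If `a` never occurs in the executed sequence, then `a` stays enabled along it, since
each executed action is co-enabled with `a` at the current state, hence independent of `a`,
and independence preserves the enabledness of `a`. At the final state `t`, `a` and `b` are
then co-enabled, so `b` is independent of `a` after all.
-/

theorem Indep.step_ne_none {S A : Type*} {step : A → S → Option S} {a c : A}
    (hac : Indep step a c) {s s' : S} (ha : step a s ≠ none) (hc : step c s = some s') :
    step a s' ≠ none := by
  obtain ⟨sa, hsa⟩ := Option.ne_none_iff_exists'.1 ha
  obtain ⟨hca, hcomm⟩ := hac s sa s' hsa hc
  exact hcomm ▸ hca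

theorem run_step_ne_none {S A : Type*} {step : A → S → Option S} {a : A} :
    ∀ {T : List A} {s t : S},
      (∀ c ∈ T, ∀ u, step a u ≠ none → step c u ≠ none → Indep step a c) →
      step a s ≠ none → run step T s = some t → step a t ≠ none
  | [], s, t, _, ha, hrun => by
    rw [run, Option.some_inj] at hrun
    exact hrun ▸ ha
  | c :: T, s, t, hT, ha, hrun => by
    obtain ⟨s', hc, hrun'⟩ := Option.bind_eq_some_iff.1 hrun
    have hac : Indep step a c := hT c List.mem_cons_self s ha (by simp [hc])
    exact run_step_ne_none (fun d hd => hT d (List.mem_cons_of_mem c hd))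
      (hac.step_ne_none ha hc) hrun'

/-- Condition C1 of partial-order reduction for the singleton ample set `{a}`:
if `a` is enabled at `s` and every action `b ≠ a` co-enabled with `a` at some
state is independent of `a`, then along every execution from `s` followed by an
enabled action `b` with `b ≠ a` and `b` dependent on `a`, the action `a` occurs
in the executed sequence. -/
theorem ample_C1 {S A : Type*} (step : A → S → Option S) (a : A) (s : S)
    (ha : step a s ≠ none)
    (hco : ∀ b : A, b ≠ a →
      (∃ s' : S, step a s' ≠ none ∧ step b s' ≠ none) → Indep step a b) :
    ∀ (T : List A) (t : S) (b : A),
      run step T s = some t → step b t ≠ none → b ≠ a → ¬ Indep step a b →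
      a ∈ T := by
  intro T t b hrun hb hba hdep
  by_contra haT
  have hat : step a t ≠ none :=
    run_step_ne_none (fun c hc u hau hcu => hco c (ne_of_mem_of_not_mem hc haT) ⟨u, hau, hcu⟩)
      ha hrun
  exact hdep (hco b hba ⟨t, hat, hb⟩)
end
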